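/- Let Y be an integrable real-valued random variable with cumulative distribution function F(s) = P(Y ≤ s), and let τ ∈ (0,1). Then for all real numbers q and a, E[ρ_τ(Y − a)] − E[ρ_τ(Y − q)] = ∫_q^a (F(s) − τ) ds. -/

import Mathlib

/-!
Since `ρ_τ(v) = τ v + (-v)⁺`, the linear parts contribute `τ (q - a)`, and it remains to see that
`E[(a - Y)⁺] - E[(q - Y)⁺] = ∫_q^a F`. Pointwise `(a - y)⁺ - (q - y)⁺ = ∫_q^a 1{y ≤ s} ds`, so taking
expectations and exchanging the two integrals (Fubini) turns `E[1{Y ≤ s}]` into `F(s)`.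
-/

open MeasureTheory Set

lemma mul_sub_ite_neg_eq (τ v : ℝ) :
    v * (τ - if v < 0 then (1 : ℝ) else 0) = τ * v + (-v)⁺ := by
  rcases lt_or_ge v 0 with hv | hv
  · rw [if_pos hv, posPart_eq_self.mpr (by linarith)]; ring
  · rw [if_neg (not_lt.mpr hv), posPart_eq_zero.mpr (by linarith)]; ring

lemma integral_Ioc_indicator_Ici {q a : ℝ} (hqa : q ≤ a) (y : ℝ) :
    ∫ s in Ioc q a, (Ici y).indicator 1 s = (a - y)⁺ - (q - y)⁺ := by
  have hIci : (Ici y ∩ Ioc q a : Set ℝ) =ᵐ[volume] (Ioi y ∩ Ioc q a : Set ℝ) :=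
    Ioi_ae_eq_Ici.symm.inter (ae_eq_refl _)
  rw [integral_indicator_one measurableSet_Ici, measureReal_restrict_apply' measurableSet_Ioc,
    measureReal_congr hIci, inter_comm, Ioc_inter_Ioi, Real.volume_real_Ioc]
  simp only [posPart_def]
  rcases le_total y q with h | h <;> rcases le_total y a with h' | h'
  all_goals simp [h, h', hqa]
  linarith

lemma integral_posPart_sub_sub_posPart_sub_of_le (μ : Measure ℝ) [IsFiniteMeasure μ] {q a : ℝ}
    (hqa : q ≤ a) :
    ∫ y, ((a - y)⁺ - (q - y)⁺) ∂μ = ∫ s in Ioc q a, μ.real (Iic s) := by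
  have hint : Integrable (Function.uncurry fun y s ↦ (Ici y).indicator (1 : ℝ → ℝ) s)
      (μ.prod (volume.restrict (Ioc q a))) := by
    have hle : MeasurableSet {p : ℝ × ℝ | p.1 ≤ p.2} :=
      measurableSet_le measurable_fst measurable_snd
    have hfun : (Function.uncurry fun y s ↦ (Ici y).indicator (1 : ℝ → ℝ) s) =
        {p : ℝ × ℝ | p.1 ≤ p.2}.indicator 1 := by
      ext ⟨y, s⟩
      simp [indicator_apply]
    rw [hfun]
    exact (integrable_const (1 : ℝ)).indicator hle
  calc ∫ y, ((a - y)⁺ - (q - y)⁺) ∂μ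
      = ∫ y, (∫ s in Ioc q a, (Ici y).indicator (1 : ℝ → ℝ) s) ∂μ := by
        simp only [integral_Ioc_indicator_Ici hqa]
    _ = ∫ s in Ioc q a, ∫ y, (Iic s).indicator (1 : ℝ → ℝ) y ∂μ := by
        rw [integral_integral_swap hint]
        simp only [indicator_apply, mem_Ici, mem_Iic, Pi.one_apply]
    _ = ∫ s in Ioc q a, μ.real (Iic s) := by
        simp only [integral_indicator_one measurableSet_Iic]

lemma integral_posPart_sub_sub_posPart_sub (μ : Measure ℝ) [IsFiniteMeasure μ] (q a : ℝ) :
    ∫ y, ((a - y)⁺ - (q - y)⁺) ∂μ = ∫ s in q..a, μ.real (Iic s) := by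
  rcases le_total q a with hqa | haq
  · rw [intervalIntegral.integral_of_le hqa, integral_posPart_sub_sub_posPart_sub_of_le μ hqa]
  · rw [intervalIntegral.integral_symm, intervalIntegral.integral_of_le haq,
      ← integral_posPart_sub_sub_posPart_sub_of_le μ haq, ← integral_neg]
    simp

lemma integral_posPart_sub_sub_posPart_sub_comp {Ω : Type*} [MeasurableSpace Ω] (P : Measure Ω)
    [IsFiniteMeasure P] {Y : Ω → ℝ} (hY : AEMeasurable Y P) (q a : ℝ) :
    ∫ ω, ((a - Y ω)⁺ - (q - Y ω)⁺) ∂P = ∫ s in q..a, (P {ω | Y ω ≤ s}).toReal := by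
  have h := integral_posPart_sub_sub_posPart_sub (P.map Y) q a
  rw [integral_map hY (by fun_prop)] at h
  simp_rw [h, measureReal_def, Measure.map_apply_of_aemeasurable hY measurableSet_Iic]
  rfl

lemma integrable_posPart_const_sub {Ω : Type*} [MeasurableSpace Ω] {P : Measure Ω}
    [IsFiniteMeasure P] {Y : Ω → ℝ} (hY : Integrable Y P) (c : ℝ) :
    Integrable (fun ω ↦ (c - Y ω)⁺) P :=
  ((integrable_const c).sub hY).pos_part

lemma integral_mul_sub_ite_neg {Ω : Type*} [MeasurableSpace Ω] (P : Measure Ω)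
    [IsProbabilityMeasure P] {Y : Ω → ℝ} (hY : Integrable Y P) (τ c : ℝ) :
    ∫ ω, (Y ω - c) * (τ - if (Y ω - c) < 0 then (1 : ℝ) else 0) ∂P
      = τ * (∫ ω, Y ω ∂P - c) + ∫ ω, (c - Y ω)⁺ ∂P := by
  simp only [mul_sub_ite_neg_eq, neg_sub]
  rw [integral_add (f := fun ω ↦ τ * (Y ω - c)) ((hY.sub (integrable_const c)).const_mul τ)
      (integrable_posPart_const_sub hY c),
    integral_const_mul, integral_sub hY (integrable_const c), integral_const, probReal_univ,
    one_smul]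

theorem expected_check_loss_difference_general
    {Ω : Type*} [MeasurableSpace Ω] (P : Measure Ω) [IsProbabilityMeasure P]
    (Y : Ω → ℝ) (hY : Integrable Y P) (τ : ℝ) (q a : ℝ) :
    (∫ ω, (Y ω - a) * (τ - if (Y ω - a) < 0 then (1 : ℝ) else 0) ∂P)
      - (∫ ω, (Y ω - q) * (τ - if (Y ω - q) < 0 then (1 : ℝ) else 0) ∂P)
      = ∫ s in q..a, ((P {ω | Y ω ≤ s}).toReal - τ) := by
  have hF : Monotone fun s ↦ (P {ω | Y ω ≤ s}).toReal := fun s t hst ↦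
    measureReal_mono fun ω hω ↦ le_trans hω hst
  rw [integral_mul_sub_ite_neg P hY, integral_mul_sub_ite_neg P hY,
    intervalIntegral.integral_sub hF.intervalIntegrable intervalIntegrable_const,
    ← integral_posPart_sub_sub_posPart_sub_comp P hY.aemeasurable,
    integral_sub (integrable_posPart_const_sub hY a) (integrable_posPart_const_sub hY q),
    intervalIntegral.integral_const, smul_eq_mul]
  ring

/-- if `Y` is an integrable real random variable with CDF
`F(s) = P(Y ≤ s)` and `τ ∈ (0,1)`, then for all reals `q, a`,
`E[ρ_τ(Y − a)] − E[ρ_τ(Y − q)] = ∫_q^a (F(s) − τ) ds`,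
where `ρ_τ(v) = v·(τ − 1{v < 0})`. -/
theorem expected_check_loss_difference
    {Ω : Type*} [MeasurableSpace Ω] (P : Measure Ω) [IsProbabilityMeasure P]
    (Y : Ω → ℝ) (hY : Integrable Y P) (τ : ℝ) (hτ0 : 0 < τ) (hτ1 : τ < 1) (q a : ℝ) :
    (∫ ω, (Y ω - a) * (τ - if (Y ω - a) < 0 then (1 : ℝ) else 0) ∂P)
      - (∫ ω, (Y ω - q) * (τ - if (Y ω - q) < 0 then (1 : ℝ) else 0) ∂P)
      = ∫ s in q..a, ((P {ω | Y ω ≤ s}).toReal - τ) :=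
  expected_check_loss_difference_general P Y hY τ q a
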